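/- In any word p₁⋯p_k of permutations representing a bipartite graph G = (A ∪ B, E) permutationally, for each vertex a ∈ A and each permutation p_i: if some neighbor of a appears to the right of a in p_i, then every neighbor of a appears to the right of a in p_i (and symmetrically for the left side). -/

import Mathlib

/-- Letters `a` and `b` alternate in the word `w` if the subword of `w` obtained by
keeping only the occurrences of `a` and `b` has no two equal consecutive letters. -/
def Alternates {V : Type*} [DecidableEq V] (w : List V) (a b : V) : Prop :=
  (w.filter fun x => decide (x = a ∨ x = b)).Chain' (· ≠ ·)

/-- The word `w` represents the simple graph `G`: distinct vertices are adjacent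
iff they alternate in `w`. -/
def Represents {V : Type*} [DecidableEq V] (w : List V) (G : SimpleGraph V) : Prop :=
  ∀ a b : V, a ≠ b → (G.Adj a b ↔ Alternates w a b)

/-- The list `p` is a permutation of the type `V`: it has no duplicates and
contains every element of `V`. -/
def IsPermList {V : Type*} (p : List V) : Prop :=
  p.Nodup ∧ ∀ x : V, x ∈ p

/-- `a` precedes `b` in the list `p`. -/
def Precedes {V : Type*} [DecidableEq V] (p : List V) (a b : V) : Prop :=
  p.idxOf a < p.idxOf b


/-! Restricted to two distinct letters `x`, `y`, each permutation reads `xy` or `yx`, and the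
concatenation alternates in `x`, `y` iff all these blocks agree. So adjacent vertices keep their
relative order across all permutations, and two vertices that come in the same order in every
permutation are adjacent. If neighbours `b`, `c` of `a` stood as `c a b` in one permutation, they
would do so in every permutation, making `c` and `b` adjacent; but both lie in `B`. -/

namespace List

variable {α : Type*}

theorem filter_eq_singleton_of_nodup [DecidableEq α] {l : List α} {P : α → Bool} {y : α}
    (hl : l.Nodup) (hy : y ∈ l) (hP : ∀ z ∈ l, P z ↔ z = y) : l.filter P = [y] := by
  have hPy : l.filter P = l.filter (fun z => decide (z = y)) :=
    filter_congr fun z hz => by rw [Bool.eq_iff_iff, decide_eq_true_iff]; exact hP z hz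
  rw [hPy, filter_eq, count_eq_one_of_mem hl hy, replicate_one]

theorem pairwise_eq_iff_forall {l : List α} : l.Pairwise (· = ·) ↔ ∀ a ∈ l, ∀ b ∈ l, a = b :=
  ⟨fun h => h.forall_of_forall fun _ _ => rfl, pairwise_of_forall_mem_list⟩

theorem isChain_ne_flatten_map_cond_iff {x y : α} (hxy : x ≠ y) (l : List Bool) :
    (l.map fun b => bif b then [x, y] else [y, x]).flatten.IsChain (· ≠ ·) ↔
      l.IsChain (· = ·) := by
  have hseam : (fun b c : Bool => ∀ u ∈ (bif b then [x, y] else [y, x]).getLast?,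
      ∀ v ∈ (bif c then [x, y] else [y, x]).head?, u ≠ v) = (· = ·) := by
    funext b c
    cases b <;> cases c <;> simp [hxy, hxy.symm]
  rw [isChain_flatten (by simp), isChain_map, hseam, forall_mem_map]
  refine and_iff_right_of_imp fun _ b _ => ?_
  cases b <;> simp [hxy, hxy.symm]

end List

section Precedes

variable {V : Type*} [DecidableEq V]

instance (p : List V) : DecidableRel (Precedes p) := fun _ _ => Nat.decLt _ _

theorem Precedes.ne {p : List V} {x y : V} (h : Precedes p x y) : x ≠ y := by
  rintro rfl
  exact lt_irrefl _ h

theorem Precedes.trans {p : List V} {x y z : V} (hxy : Precedes p x y) (hyz : Precedes p y z) :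
    Precedes p x z :=
  Nat.lt_trans hxy hyz

theorem precedes_of_not_precedes {p : List V} {x y : V} (hx : x ∈ p) (hxy : x ≠ y)
    (h : ¬Precedes p x y) : Precedes p y x :=
  lt_of_le_of_ne (not_lt.1 h) fun heq => hxy ((List.idxOf_inj hx).1 heq.symm)

theorem filter_pair_eq_cond_precedes {p : List V} {x y : V} (hp : p.Nodup) (hxy : x ≠ y)
    (hx : x ∈ p) (hy : y ∈ p) :
    p.filter (fun z => decide (z = x ∨ z = y)) =
      bif decide (Precedes p x y) then [x, y] else [y, x] := by
  induction p with
  | nil => simp at hx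
  | cons c t ih =>
    obtain ⟨hct, ht⟩ := List.nodup_cons.1 hp
    by_cases hcx : c = x
    · subst hcx
      have hyt : y ∈ t := (List.mem_cons.1 hy).resolve_left hxy.symm
      have hrest : t.filter (fun z => decide (z = c ∨ z = y)) = [y] :=
        List.filter_eq_singleton_of_nodup ht hyt fun z hz => by
          simp [show z ≠ c from fun h => hct (h ▸ hz)]
      have hprec : Precedes (c :: t) c y := by simp [Precedes, List.idxOf_cons_ne _ hxy]
      rw [List.filter_cons_of_pos (by simp), hrest]
      simp [hprec]
    by_cases hcy : c = y
    · subst hcy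
      have hxt : x ∈ t := (List.mem_cons.1 hx).resolve_left (Ne.symm hcx)
      have hrest : t.filter (fun z => decide (z = x ∨ z = c)) = [x] :=
        List.filter_eq_singleton_of_nodup ht hxt fun z hz => by
          simp [show z ≠ c from fun h => hct (h ▸ hz)]
      have hprec : ¬Precedes (c :: t) x c := by simp [Precedes]
      rw [List.filter_cons_of_pos (by simp), hrest]
      simp [hprec]
    · have hxt : x ∈ t := (List.mem_cons.1 hx).resolve_left (Ne.symm hcx)
      have hyt : y ∈ t := (List.mem_cons.1 hy).resolve_left (Ne.symm hcy)
      have hprec : Precedes (c :: t) x y ↔ Precedes t x y := by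
        simp [Precedes, List.idxOf_cons_ne _ hcx, List.idxOf_cons_ne _ hcy]
      rw [List.filter_cons_of_neg (by simp [hcx, hcy]), ih ht hxt hyt]
      simp [hprec]

theorem alternates_flatten_iff {ps : List (List V)} (hps : ∀ p ∈ ps, IsPermList p) {x y : V}
    (hxy : x ≠ y) :
    Alternates ps.flatten x y ↔ ∀ p ∈ ps, ∀ q ∈ ps, (Precedes p x y ↔ Precedes q x y) := by
  have hblocks : ps.map (List.filter fun z => decide (z = x ∨ z = y)) =
      (ps.map fun p => decide (Precedes p x y)).map fun b => bif b then [x, y] else [y, x] := by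
    rw [List.map_map]
    exact List.map_congr_left fun p hp =>
      filter_pair_eq_cond_precedes (hps p hp).1 hxy ((hps p hp).2 x) ((hps p hp).2 y)
  change (ps.flatten.filter _).IsChain _ ↔ _
  rw [List.filter_flatten, hblocks, List.isChain_ne_flatten_map_cond_iff hxy,
    List.isChain_iff_pairwise, List.pairwise_eq_iff_forall]
  simp

end Precedes

namespace Represents

variable {V : Type*} [DecidableEq V] {ps : List (List V)} {G : SimpleGraph V}

theorem adj_iff_forall_precedes_iff (hrep : Represents ps.flatten G)
    (hps : ∀ p ∈ ps, IsPermList p) {x y : V} (hxy : x ≠ y) :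
    G.Adj x y ↔ ∀ p ∈ ps, ∀ q ∈ ps, (Precedes p x y ↔ Precedes q x y) :=
  (hrep x y hxy).trans (alternates_flatten_iff hps hxy)

theorem adj_of_precedes_of_precedes (hrep : Represents ps.flatten G)
    (hps : ∀ p ∈ ps, IsPermList p) {x y z : V} (hxy : G.Adj x y) (hyz : G.Adj y z)
    {p : List V} (hp : p ∈ ps) (hpxy : Precedes p x y) (hpyz : Precedes p y z) : G.Adj x z := by
  have hsame {u v : V} (huv : G.Adj u v) (h : Precedes p u v) : ∀ q ∈ ps, Precedes q u v :=
    fun q hq => ((hrep.adj_iff_forall_precedes_iff hps huv.ne).1 huv p hp q hq).1 h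
  refine (hrep.adj_iff_forall_precedes_iff hps (hpxy.trans hpyz).ne).2 fun q hq r hr => ?_
  exact iff_of_true ((hsame hxy hpxy q hq).trans (hsame hyz hpyz q hq))
    ((hsame hxy hpxy r hr).trans (hsame hyz hpyz r hr))

end Represents

theorem neighbors_same_side_general {V : Type*} [DecidableEq V] (G : SimpleGraph V)
    (A B : Set V) (hdisj : Disjoint A B)
    (hbip : ∀ a b : V, G.Adj a b → (a ∈ A ↔ b ∈ B))
    (ps : List (List V)) (hps : ∀ p ∈ ps, IsPermList p)
    (hrep : Represents ps.flatten G)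
    (a : V) (ha : a ∈ A) (p : List V) (hp : p ∈ ps) :
    ((∃ b : V, G.Adj a b ∧ Precedes p a b) → ∀ b : V, G.Adj a b → Precedes p a b) ∧
    ((∃ b : V, G.Adj a b ∧ Precedes p b a) → ∀ b : V, G.Adj a b → Precedes p b a) := by
  have hnonadj {b c : V} (hab : G.Adj a b) (hac : G.Adj a c) : ¬G.Adj b c := fun hbc =>
    Set.disjoint_left.1 hdisj ((hbip b c hbc).2 ((hbip a c hac).1 ha)) ((hbip a b hab).1 ha)
  constructor
  · rintro ⟨b, hab, hpab⟩ c hac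
    by_contra hpac
    have hpca := precedes_of_not_precedes ((hps p hp).2 a) hac.ne hpac
    exact hnonadj hac hab (hrep.adj_of_precedes_of_precedes hps hac.symm hab hp hpca hpab)
  · rintro ⟨b, hab, hpba⟩ c hac
    by_contra hpca
    have hpac := precedes_of_not_precedes ((hps p hp).2 c) hac.ne.symm hpca
    exact hnonadj hab hac (hrep.adj_of_precedes_of_precedes hps hab.symm hac hp hpba hpac)

/-- In any concatenation of permutations representing a bipartite graph `G = (A ∪ B, E)`
permutationally, for each vertex `a ∈ A` and each constituent permutation `p`: if some
neighbor of `a` appears to the right of `a` in `p`, then every neighbor of `a` appears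
to the right of `a` in `p`; and symmetrically for the left side. -/
theorem neighbors_same_side {V : Type*} [DecidableEq V] (G : SimpleGraph V)
    (A B : Set V) (hcover : A ∪ B = Set.univ) (hdisj : Disjoint A B)
    (hbip : ∀ a b : V, G.Adj a b → (a ∈ A ↔ b ∈ B))
    (ps : List (List V)) (hps : ∀ p ∈ ps, IsPermList p)
    (hrep : Represents ps.flatten G)
    (a : V) (ha : a ∈ A) (p : List V) (hp : p ∈ ps) :
    ((∃ b : V, G.Adj a b ∧ Precedes p a b) → ∀ b : V, G.Adj a b → Precedes p a b) ∧
    ((∃ b : V, G.Adj a b ∧ Precedes p b a) → ∀ b : V, G.Adj a b → Precedes p b a) :=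
  neighbors_same_side_general G A B hdisj hbip ps hps hrep a ha p hp
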